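/- arXiv:0903.0307 — 2 statements merged into one kernel-verified Lean document; each statement's English description precedes it below -/
import Mathlib

section
/- Let δ ≥ 0 and suppose the frozen set F ⊆ {0,…,N−1} is such that for every i ∈ F, Σ_{ȳ} 2^{−N} Σ_{u₀^{i−1}} (∏_{j=0}^{i−1} P(u_j | u₀^{j−1}, ȳ)) · |1/2 − P(0 | u₀^{i−1}, ȳ)| ≤ δ. Then (1/N) Σ_{ū,ȳ} Q(ū,ȳ) d_H(ȳ, ūH_n) ≤ (1/N) Σ_{ū,ȳ} P(ū,ȳ) d_H(ȳ, ūH_n) + 2|F|δ, where P(ū,ȳ) = 2^{−N} ∏_{i=0}^{N−1} P(u_i | u₀^{i−1}, ȳ), Q(ū,ȳ) = 2^{−N} ∏_{i=0}^{N−1} Q(u_i | u₀^{i−1}, ȳ), Q(u_i|u₀^{i−1},ȳ) = 1/2 for i ∈ F and Q(u_i|u₀^{i−1},ȳ) = P(u_i|u₀^{i−1},ȳ) for i ∉ F, and d_H denotes Hamming distance. -/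
open Finset

noncomputable section

/-- The polarization kernel `G₂ = [[1,0],[1,1]]` over GF(2). -/
def G2 : Matrix (Fin 2) (Fin 2) (ZMod 2) := !![1, 0; 1, 1]

/-- Index identification `Fin 2 × Fin (2^n) ≃ Fin (2^(n+1))`. -/
def finPowEquiv (n : ℕ) : Fin 2 × Fin (2 ^ n) ≃ Fin (2 ^ (n + 1)) :=
  finProdFinEquiv.trans (finCongr (by rw [pow_succ]; ring))

/-- The `n`-fold Kronecker power `G₂^{⊗n}` over GF(2). -/
def kronPow : (n : ℕ) → Matrix (Fin (2 ^ n)) (Fin (2 ^ n)) (ZMod 2)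
  | 0 => 1
  | n + 1 => Matrix.reindex (finPowEquiv n) (finPowEquiv n)
      (Matrix.kroneckerMap (· * ·) G2 (kronPow n))

/-- Reversal of the `n`-bit binary expansion of `i`. -/
def bitRevNat (n i : ℕ) : ℕ :=
  ∑ k ∈ Finset.range n, if Nat.testBit i (n - 1 - k) then 2 ^ k else 0

lemma sum_range_two_pow_lt (n : ℕ) : ∑ k ∈ Finset.range n, 2 ^ k < 2 ^ n := by
  induction n with
  | zero => simp
  | succ m ih => rw [Finset.sum_range_succ, pow_succ]; omega

lemma bitRevNat_lt (n i : ℕ) : bitRevNat n i < 2 ^ n := by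
  have h1 : bitRevNat n i ≤ ∑ k ∈ Finset.range n, 2 ^ k :=
    Finset.sum_le_sum (fun k _ => by split <;> simp)
  have h2 := sum_range_two_pow_lt n
  omega

/-- The bit-reversal permutation matrix `Aₙ`. -/
def bitRevMatrix (n : ℕ) : Matrix (Fin (2 ^ n)) (Fin (2 ^ n)) (ZMod 2) :=
  fun i j => if (j : ℕ) = bitRevNat n (i : ℕ) then 1 else 0

/-- The polar transform matrix `Hₙ = Aₙ G₂^{⊗n}`. -/
def polarH (n : ℕ) : Matrix (Fin (2 ^ n)) (Fin (2 ^ n)) (ZMod 2) :=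
  bitRevMatrix n * kronPow n

/-- BSC(D) transition probability `W(y∣x)`. -/
def bsc (D : ℝ) (y x : ZMod 2) : ℝ := if y = x then 1 - D else D

/-- The polar transform `x̄ = ū Hₙ` of a word `ū`. -/
def polarEnc (n : ℕ) (u : Fin (2 ^ n) → ZMod 2) : Fin (2 ^ n) → ZMod 2 :=
  Matrix.vecMul u (polarH n)

/-- `W^{(i)}(ȳ, u₀^{i−1} ∣ u_i)`; it depends on `u` only through coordinates `≤ i`,
the coordinates `> i` being summed out. -/
def Wi (D : ℝ) (n : ℕ) (y : Fin (2 ^ n) → ZMod 2) (i : Fin (2 ^ n))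
    (u : Fin (2 ^ n) → ZMod 2) : ℝ :=
  ((2 : ℝ) ^ (2 ^ n - 1))⁻¹ *
    ∑ v ∈ Finset.univ.filter (fun v : Fin (2 ^ n) → ZMod 2 => ∀ j, j ≤ i → v j = u j),
      ∏ j, bsc D (y j) (polarEnc n v j)

/-- The posterior `P(u_i ∣ u₀^{i−1}, ȳ)`. -/
def post (D : ℝ) (n : ℕ) (y : Fin (2 ^ n) → ZMod 2) (i : Fin (2 ^ n))
    (u : Fin (2 ^ n) → ZMod 2) : ℝ :=
  Wi D n y i u /
    (Wi D n y i (Function.update u i 0) + Wi D n y i (Function.update u i 1))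

/-- The joint distribution `P(ū, ȳ) = 2^{−N} ∏_i P(u_i ∣ u₀^{i−1}, ȳ)`. -/
def Pfull (D : ℝ) (n : ℕ) (u y : Fin (2 ^ n) → ZMod 2) : ℝ :=
  ((2 : ℝ) ^ (2 ^ n))⁻¹ * ∏ i, post D n y i u

/-- The joint distribution `Q(ū, ȳ)` in which the frozen coordinates `i ∈ F` are replaced
by fair coin flips. -/
def Qfull (D : ℝ) (n : ℕ) (F : Finset (Fin (2 ^ n))) (u y : Fin (2 ^ n) → ZMod 2) : ℝ :=
  ((2 : ℝ) ^ (2 ^ n))⁻¹ * ∏ i, (if i ∈ F then (1 / 2 : ℝ) else post D n y i u)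

/-- `E_P[ |1/2 − P(0 ∣ U₀^{i−1}, Ȳ)| ]`, pasts being represented by words vanishing from
coordinate `i` onwards. -/
def frozenBias (D : ℝ) (n : ℕ) (i : Fin (2 ^ n)) : ℝ :=
  ∑ y : Fin (2 ^ n) → ZMod 2, ((2 : ℝ) ^ (2 ^ n))⁻¹ *
    ∑ u ∈ Finset.univ.filter (fun u : Fin (2 ^ n) → ZMod 2 => ∀ j, i ≤ j → u j = 0),
      (∏ j ∈ Finset.univ.filter (fun j => j < i), post D n y j u) *
        |1 / 2 - post D n y i u|

/-! The joint laws `P` and `Q` are products of successive conditionals, and `Q` is obtained from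
`P` by replacing the conditionals at the frozen indices by fair coin flips. Doing the replacements
one index `k ∈ F` at a time, in increasing order, the ℓ¹ distance between consecutive hybrids is
exactly twice the bias at `k`: the factors after `k` are conditionals and sum out, the factors
before `k` are those of `P`, and `|1/2 − P(u_k ∣ ⋯)|` does not depend on `u_k`. Hence
`Σ |Q − P| ≤ 2 |F| δ`, and since the Hamming distortion lies in `[0, N]`, the normalized expected
distortions differ by at most this ℓ¹ distance. -/

open Function

section Marginal

variable {ι α R : Type*} [Fintype ι] [Fintype α]

theorem sum_sum_update {M : Type*} [DecidableEq ι] [AddCommMonoid M] (f : (ι → α) → M) (t : ι) :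
    ∑ u, ∑ a, f (update u t a) = Fintype.card α • ∑ u, f u := by
  have hinv : Involutive fun x : (ι → α) × α => (update x.1 t x.2, x.1 t) := by
    rintro ⟨u, a⟩
    simp
  calc ∑ u, ∑ a, f (update u t a)
      = ∑ x : (ι → α) × α, f (update x.1 t x.2, x.1 t).1 := (Fintype.sum_prod_type' _).symm
    _ = ∑ x : (ι → α) × α, f x.1 := Equiv.sum_comp hinv.toPerm fun x => f x.1
    _ = Fintype.card α • ∑ u, f u := by
      rw [Fintype.sum_prod_type, Finset.smul_sum]
      simp

theorem card_mul_sum_mul_eq_sum [DecidableEq ι] [CommSemiring R] {t : ι} {g c : (ι → α) → R}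
    (hg : ∀ u a, g (update u t a) = g u) (hc : ∀ u, ∑ a, c (update u t a) = 1) :
    Fintype.card α * ∑ u, g u * c u = ∑ u, g u := by
  rw [← nsmul_eq_mul, ← sum_sum_update _ t]
  simp only [hg, ← Finset.mul_sum, hc, mul_one]

theorem pow_card_mul_sum_mul_prod_eq_sum [LinearOrder ι] [CommSemiring R] (S : Finset ι)
    {h : (ι → α) → R} {c : ι → (ι → α) → R}
    (hh : ∀ j ∈ S, ∀ u a, h (update u j a) = h u)
    (hc : ∀ i ∈ S, ∀ j ∈ S, i < j → ∀ u a, c i (update u j a) = c i u)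
    (hsum : ∀ i ∈ S, ∀ u, ∑ a, c i (update u i a) = 1) :
    (Fintype.card α : R) ^ S.card * ∑ u, h u * ∏ i ∈ S, c i u = ∑ u, h u := by
  induction S using Finset.induction_on_max with
  | empty => simp
  | insert t S hlt ih =>
    have htS : t ∉ S := fun ht => lt_irrefl t (hlt t ht)
    have hg : ∀ u a, h (update u t a) * ∏ i ∈ S, c i (update u t a) = h u * ∏ i ∈ S, c i u := by
      intro u a
      rw [hh t (S.mem_insert_self t)]
      congr 1
      exact Finset.prod_congr rfl fun i hi =>
        hc i (S.mem_insert_of_mem hi) t (S.mem_insert_self t) (hlt i hi) u a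
    have hstep := card_mul_sum_mul_eq_sum (g := fun u => h u * ∏ i ∈ S, c i u) hg
      (hsum t (S.mem_insert_self t))
    rw [← ih (fun j hj => hh j (S.mem_insert_of_mem hj))
      (fun i hi j hj => hc i (S.mem_insert_of_mem hi) j (S.mem_insert_of_mem hj))
      (fun i hi => hsum i (S.mem_insert_of_mem hi)), ← hstep, Finset.card_insert_of_notMem htS]
    simp only [Finset.prod_insert htS]
    rw [pow_succ, mul_assoc]
    congr 2
    exact Finset.sum_congr rfl fun u _ => by ring

end Marginal

section CausalKernel

variable {ι α : Type*} [Fintype ι] [LinearOrder ι] [Fintype α]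

theorem Finset.prod_eq_mul_prod_lt_mul_prod_gt {M : Type*} [CommMonoid M] (f : ι → M) (k : ι) :
    ∏ i, f i = f k * (∏ i ∈ {i | i < k}, f i) * ∏ i ∈ {i | k < i}, f i := by
  have hlt : (univ.erase k).filter (· < k) = univ.filter (· < k) := by
    ext i
    simpa using ne_of_lt
  have hgt : (univ.erase k).filter (fun i => ¬i < k) = univ.filter (k < ·) := by
    ext i
    simp only [mem_filter, mem_erase, mem_univ, and_true, true_and, not_lt]
    exact ⟨fun h => lt_of_le_of_ne h.2 (Ne.symm h.1), fun h => ⟨h.ne', h.le⟩⟩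
  rw [← Finset.mul_prod_erase univ f (mem_univ k),
    ← Finset.prod_filter_mul_prod_filter_not (univ.erase k) (· < k), hlt, hgt, mul_assoc]

/-- Successive conditional distributions on words `u : ι → α`: `p i u` is the probability of the
letter `u i` given the letters `u j`, `j < i`. -/
structure IsCausalKernel (p : ι → (ι → α) → ℝ) : Prop where
  nonneg : ∀ i u, 0 ≤ p i u
  update_of_lt : ∀ {i j}, i < j → ∀ u a, p i (update u j a) = p i u
  sum_update : ∀ i u, ∑ a, p i (update u i a) = 1

variable {p q : ι → (ι → α) → ℝ}

theorem IsCausalKernel.pow_card_mul_sum_abs_sub (hp : IsCausalKernel p) (hq : IsCausalKernel q)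
    {k : ι} (hpq : ∀ i ≠ k, p i = q i) :
    (Fintype.card α : ℝ) ^ #{i | k < i} * ∑ u, |∏ i, p i u - ∏ i, q i u|
      = ∑ u, |p k u - q k u| * ∏ i ∈ {i | i < k}, p i u := by
  have hsplit : ∀ u, |∏ i, p i u - ∏ i, q i u|
      = (|p k u - q k u| * ∏ i ∈ {i | i < k}, p i u) * ∏ i ∈ {i | k < i}, p i u := by
    intro u
    have hlt : ∏ i ∈ {i | i < k}, q i u = ∏ i ∈ {i | i < k}, p i u :=
      Finset.prod_congr rfl fun i hi => by rw [hpq i (Finset.mem_filter.1 hi).2.ne]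
    have hgt : ∏ i ∈ {i | k < i}, q i u = ∏ i ∈ {i | k < i}, p i u :=
      Finset.prod_congr rfl fun i hi => by rw [hpq i (Finset.mem_filter.1 hi).2.ne']
    rw [Finset.prod_eq_mul_prod_lt_mul_prod_gt (p · u) k,
      Finset.prod_eq_mul_prod_lt_mul_prod_gt (q · u) k, hlt, hgt, ← sub_mul, ← sub_mul, abs_mul,
      abs_mul, abs_of_nonneg (Finset.prod_nonneg fun i _ => hp.nonneg i u),
      abs_of_nonneg (Finset.prod_nonneg fun i _ => hp.nonneg i u)]
  simp_rw [hsplit]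
  refine pow_card_mul_sum_mul_prod_eq_sum _ (fun j hj u a => ?_)
    (fun i _ j _ hij => hp.update_of_lt hij) (fun i _ => hp.sum_update i)
  have hkj : k < j := (Finset.mem_filter.1 hj).2
  rw [hp.update_of_lt hkj, hq.update_of_lt hkj,
    Finset.prod_congr rfl fun i hi => hp.update_of_lt ((Finset.mem_filter.1 hi).2.trans hkj) u a]

end CausalKernel

theorem ZMod.sum_univ_two {M : Type*} [AddCommMonoid M] (f : ZMod 2 → M) : ∑ a, f a = f 0 + f 1 :=
  Fin.sum_univ_two f

section BinaryKernel

variable {ι : Type*} [LinearOrder ι] {p : ι → (ι → ZMod 2) → ℝ}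

theorem IsCausalKernel.abs_half_sub_update (hp : IsCausalKernel p) (k : ι) (u : ι → ZMod 2)
    (a : ZMod 2) : |1 / 2 - p k (update u k a)| = |1 / 2 - p k u| := by
  have hsum : p k (update u k 0) + p k (update u k 1) = 1 := by
    simpa [ZMod.sum_univ_two] using hp.sum_update k u
  have hflip : ∀ b, |1 / 2 - p k (update u k b)| = |1 / 2 - p k (update u k 0)| := by
    intro b
    obtain rfl | rfl : b = 0 ∨ b = 1 := by revert b; decide
    · rfl
    · rw [← abs_neg]
      congr 1
      linarith
  rw [hflip, ← hflip (u k), update_eq_self]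

theorem isCausalKernel_normalize {W : ι → (ι → ZMod 2) → ℝ} (hpos : ∀ i u, 0 < W i u)
    (hW : ∀ i u v, (∀ j ≤ i, u j = v j) → W i u = W i v) :
    IsCausalKernel fun i u => W i u / (W i (update u i 0) + W i (update u i 1)) where
  nonneg i u := (div_pos (hpos i u) (add_pos (hpos _ _) (hpos _ _))).le
  update_of_lt {i j} hij u a := by
    have hne : ∀ l ≤ i, l ≠ j := fun l hl => (hl.trans_lt hij).ne
    rw [update_comm (hne i le_rfl).symm, update_comm (hne i le_rfl).symm,
      hW i (update u j a) u fun l hl => update_of_ne (hne l hl) _ _,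
      hW i (update (update u i 0) j a) (update u i 0) fun l hl => update_of_ne (hne l hl) _ _,
      hW i (update (update u i 1) j a) (update u i 1) fun l hl => update_of_ne (hne l hl) _ _]
  sum_update i u := by
    simp only [ZMod.sum_univ_two, update_idem, ← add_div]
    exact div_self (add_pos (hpos _ _) (hpos _ _)).ne'

def freeze (F : Finset ι) (p : ι → (ι → ZMod 2) → ℝ) (i : ι) (u : ι → ZMod 2) : ℝ :=
  if i ∈ F then 1 / 2 else p i u

theorem isCausalKernel_freeze (hp : IsCausalKernel p) (F : Finset ι) :
    IsCausalKernel (freeze F p) where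
  nonneg i u := by
    unfold freeze
    split_ifs
    exacts [by norm_num, hp.nonneg i u]
  update_of_lt hij u a := by simp only [freeze, hp.update_of_lt hij]
  sum_update i u := by
    unfold freeze
    split_ifs
    · norm_num [ZMod.sum_univ_two]
    · exact hp.sum_update i u

def kernelBias [Fintype ι] (p : ι → (ι → ZMod 2) → ℝ) (k : ι) : ℝ :=
  ∑ u ∈ {u : ι → ZMod 2 | ∀ j, k ≤ j → u j = 0},
    (∏ j ∈ {j | j < k}, p j u) * |1 / 2 - p k u|

variable [Fintype ι]

theorem IsCausalKernel.pow_two_mul_kernelBias (hp : IsCausalKernel p) (k : ι) :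
    (2 : ℝ) ^ #{j | k ≤ j} * kernelBias p k
      = ∑ u, |1 / 2 - p k u| * ∏ i ∈ {i | i < k}, p i u := by
  have hind : kernelBias p k = ∑ u, (|1 / 2 - p k u| * ∏ i ∈ {i | i < k}, p i u) *
      ∏ j ∈ {j | k ≤ j}, if u j = 0 then (1 : ℝ) else 0 := by
    simp only [kernelBias, Finset.prod_boole, mul_ite, mul_one, mul_zero, ← Finset.sum_filter]
    exact Finset.sum_congr (by ext u; simp) fun u _ => mul_comm _ _
  have hh : ∀ j ∈ ({j | k ≤ j} : Finset ι), ∀ u a,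
      |1 / 2 - p k (update u j a)| * ∏ i ∈ {i | i < k}, p i (update u j a)
        = |1 / 2 - p k u| * ∏ i ∈ {i | i < k}, p i u := by
    intro j hj u a
    have hkj : k ≤ j := (Finset.mem_filter.1 hj).2
    rw [Finset.prod_congr rfl fun i hi =>
      hp.update_of_lt ((Finset.mem_filter.1 hi).2.trans_le hkj) u a]
    obtain rfl | hlt := hkj.eq_or_lt
    · rw [hp.abs_half_sub_update]
    · rw [hp.update_of_lt hlt]
  have hmarg := pow_card_mul_sum_mul_prod_eq_sum ({j | k ≤ j} : Finset ι)
    (h := fun u => |1 / 2 - p k u| * ∏ i ∈ {i | i < k}, p i u)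
    (c := fun j u => if u j = 0 then (1 : ℝ) else 0) hh
    (fun i _ j _ hij u a => by rw [update_of_ne hij.ne]) (fun i _ u => by simp)
  rw [hind, ← hmarg, ZMod.card]
  push_cast
  rfl

theorem IsCausalKernel.sum_abs_prod_freeze_insert_sub (hp : IsCausalKernel p) {k : ι}
    {F : Finset ι} (hk : ∀ i ∈ F, k < i) :
    ∑ u, |∏ i, freeze (insert k F) p i u - ∏ i, freeze F p i u| = 2 * kernelBias p k := by
  have hkF : k ∉ F := fun h => lt_irrefl k (hk k h)
  have hswap := (isCausalKernel_freeze hp (insert k F)).pow_card_mul_sum_abs_sub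
    (isCausalKernel_freeze hp F) (k := k) fun i hi => by ext u; simp [freeze, hi]
  have hlt : ∀ u, ∏ i ∈ {i | i < k}, freeze (insert k F) p i u = ∏ i ∈ {i | i < k}, p i u :=
    fun u => Finset.prod_congr rfl fun i hi => by
      have hik : i < k := (Finset.mem_filter.1 hi).2
      have hiF : i ∉ F := fun h => (hk i h).asymm hik
      simp [freeze, hik.ne, hiF]
  have hcard : #{j | k ≤ j} = #{i | k < i} + 1 := by
    rw [← Finset.card_insert_of_notMem (s := {i | k < i}) (a := k) (by simp)]
    congr 1
    ext j
    simp [le_iff_eq_or_lt, eq_comm]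
  have hfreeze_k : ∀ u, freeze (insert k F) p k u = 1 / 2 ∧ freeze F p k u = p k u :=
    fun u => by simp [freeze, hkF]
  simp only [hlt, hfreeze_k, ZMod.card] at hswap
  rw [← hp.pow_two_mul_kernelBias, hcard, pow_succ] at hswap
  push_cast at hswap
  exact mul_left_cancel₀ (pow_ne_zero _ two_ne_zero) (hswap.trans (by ring))

theorem IsCausalKernel.sum_abs_prod_freeze_sub_prod_le (hp : IsCausalKernel p) (F : Finset ι) :
    ∑ u, |∏ i, freeze F p i u - ∏ i, p i u| ≤ 2 * ∑ k ∈ F, kernelBias p k := by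
  induction F using Finset.induction_on_min with
  | empty => simp [freeze]
  | insert k F hk ih =>
    rw [Finset.sum_insert fun h => lt_irrefl k (hk k h), mul_add,
      ← hp.sum_abs_prod_freeze_insert_sub hk]
    calc ∑ u, |∏ i, freeze (insert k F) p i u - ∏ i, p i u|
        ≤ ∑ u, (|∏ i, freeze (insert k F) p i u - ∏ i, freeze F p i u|
          + |∏ i, freeze F p i u - ∏ i, p i u|) :=
          Finset.sum_le_sum fun u _ => abs_sub_le _ _ _
      _ ≤ _ := by
        rw [Finset.sum_add_distrib]
        gcongr

end BinaryKernel

theorem sum_mul_le_sum_mul_add_mul_sum_abs_sub {β : Type*} (s : Finset β) {p q f : β → ℝ} {M : ℝ}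
    (hf0 : ∀ x ∈ s, 0 ≤ f x) (hfM : ∀ x ∈ s, f x ≤ M) :
    ∑ x ∈ s, q x * f x ≤ ∑ x ∈ s, p x * f x + M * ∑ x ∈ s, |q x - p x| := by
  rw [Finset.mul_sum, ← Finset.sum_add_distrib]
  refine Finset.sum_le_sum fun x hx => ?_
  calc q x * f x = p x * f x + (q x - p x) * f x := by ring
    _ ≤ p x * f x + |q x - p x| * M := by
      have := mul_le_mul (le_abs_self (q x - p x)) (hfM x hx) (hf0 x hx) (abs_nonneg _)
      linarith
    _ = p x * f x + M * |q x - p x| := by ring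

section Polar

variable {D : ℝ} {n : ℕ}

theorem bsc_pos (hD0 : 0 < D) (hD1 : D < 1) (y x : ZMod 2) : 0 < bsc D y x := by
  unfold bsc
  split_ifs <;> linarith

theorem Wi_pos (hD0 : 0 < D) (hD1 : D < 1) (y : Fin (2 ^ n) → ZMod 2) (i : Fin (2 ^ n))
    (u : Fin (2 ^ n) → ZMod 2) : 0 < Wi D n y i u :=
  mul_pos (by positivity) <| Finset.sum_pos
    (fun v _ => Finset.prod_pos fun j _ => bsc_pos hD0 hD1 _ _) ⟨u, by simp⟩

theorem Wi_congr (y : Fin (2 ^ n) → ZMod 2) (i : Fin (2 ^ n)) {u v : Fin (2 ^ n) → ZMod 2}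
    (huv : ∀ j ≤ i, u j = v j) : Wi D n y i u = Wi D n y i v := by
  unfold Wi
  congr 2
  ext w
  simp only [Finset.mem_filter, Finset.mem_univ, true_and]
  exact forall₂_congr fun j hj => by rw [huv j hj]

theorem frozenBias_eq_sum_kernelBias (i : Fin (2 ^ n)) :
    frozenBias D n i = ∑ y, ((2 : ℝ) ^ 2 ^ n)⁻¹ * kernelBias (post D n y) i := by
  unfold frozenBias kernelBias
  congr!

theorem isCausalKernel_post (hD0 : 0 < D) (hD1 : D < 1) (y : Fin (2 ^ n) → ZMod 2) :
    IsCausalKernel (post D n y) :=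
  isCausalKernel_normalize (Wi_pos hD0 hD1 y) fun i _ _ => Wi_congr y i

theorem sum_sum_abs_Qfull_sub_Pfull_le (hD0 : 0 < D) (hD1 : D < 1) (F : Finset (Fin (2 ^ n))) :
    ∑ u, ∑ y, |Qfull D n F u y - Pfull D n u y| ≤ 2 * ∑ k ∈ F, frozenBias D n k :=
  calc ∑ u, ∑ y, |Qfull D n F u y - Pfull D n u y|
      = ∑ y, ((2 : ℝ) ^ 2 ^ n)⁻¹ *
          ∑ u, |∏ i, freeze F (post D n y) i u - ∏ i, post D n y i u| := by
        have hnorm : |((2 : ℝ) ^ 2 ^ n)⁻¹| = ((2 : ℝ) ^ 2 ^ n)⁻¹ := abs_of_pos (by positivity)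
        rw [Finset.sum_comm]
        simp only [Qfull, Pfull, freeze, ← mul_sub, abs_mul, hnorm, Finset.mul_sum]
    _ ≤ ∑ y, ((2 : ℝ) ^ 2 ^ n)⁻¹ * (2 * ∑ k ∈ F, kernelBias (post D n y) k) := by
        gcongr with y
        exact (isCausalKernel_post hD0 hD1 y).sum_abs_prod_freeze_sub_prod_le F
    _ = 2 * ∑ k ∈ F, ∑ y, ((2 : ℝ) ^ 2 ^ n)⁻¹ * kernelBias (post D n y) k := by
        simp only [Finset.mul_sum]
        rw [Finset.sum_comm]
        exact Finset.sum_congr rfl fun _ _ => Finset.sum_congr rfl fun _ _ => mul_left_comm _ _ _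
    _ = 2 * ∑ k ∈ F, frozenBias D n k := by simp only [frozenBias_eq_sum_kernelBias]

end Polar

theorem distortion_Q_versus_P_general (D : ℝ) (hD0 : 0 < D) (hD1 : D < 1)
    (n : ℕ) (F : Finset (Fin (2 ^ n))) (δ : ℝ)
    (hF : ∀ i ∈ F, frozenBias D n i ≤ δ) :
    (((2 ^ n : ℕ) : ℝ))⁻¹ *
        ∑ u : Fin (2 ^ n) → ZMod 2, ∑ y : Fin (2 ^ n) → ZMod 2,
          Qfull D n F u y * (hammingDist y (polarEnc n u) : ℝ)
      ≤ (((2 ^ n : ℕ) : ℝ))⁻¹ *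
          ∑ u : Fin (2 ^ n) → ZMod 2, ∑ y : Fin (2 ^ n) → ZMod 2,
            Pfull D n u y * (hammingDist y (polarEnc n u) : ℝ)
        + 2 * F.card * δ := by
  have hTV : ∑ u, ∑ y, |Qfull D n F u y - Pfull D n u y| ≤ 2 * F.card * δ := by
    calc _ ≤ 2 * ∑ k ∈ F, frozenBias D n k := sum_sum_abs_Qfull_sub_Pfull_le hD0 hD1 F
      _ ≤ 2 * ∑ k ∈ F, δ := by gcongr with k hk; exact hF k hk
      _ = 2 * F.card * δ := by rw [Finset.sum_const, nsmul_eq_mul]; ring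
  have hdist := sum_mul_le_sum_mul_add_mul_sum_abs_sub (Finset.univ ×ˢ Finset.univ)
    (p := fun x => Pfull D n x.1 x.2) (q := fun x => Qfull D n F x.1 x.2)
    (f := fun x => (hammingDist x.2 (polarEnc n x.1) : ℝ)) (M := ((2 ^ n : ℕ) : ℝ))
    (fun _ _ => Nat.cast_nonneg _)
    (fun x _ => by exact_mod_cast hammingDist_le_card_fintype.trans_eq (Fintype.card_fin _))
  simp only [Finset.sum_product] at hdist
  have hscaled := mul_le_mul_of_nonneg_left hdist (inv_nonneg.2 (Nat.cast_nonneg (2 ^ n)))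
  rw [mul_add, inv_mul_cancel_left₀ (by positivity)] at hscaled
  linarith

/-- **Distortion under `Q` versus distortion under `P`**: if every frozen index has bias at
most `δ`, the normalized expected Hamming distortion under `Q` exceeds the one under `P`
by at most `2|F|δ`. -/
theorem distortion_Q_versus_P (D : ℝ) (hD0 : 0 < D) (hD1 : D < 1)
    (n : ℕ) (F : Finset (Fin (2 ^ n))) (δ : ℝ) (hδ : 0 ≤ δ)
    (hF : ∀ i ∈ F, frozenBias D n i ≤ δ) :
    (((2 ^ n : ℕ) : ℝ))⁻¹ *
        ∑ u : Fin (2 ^ n) → ZMod 2, ∑ y : Fin (2 ^ n) → ZMod 2,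
          Qfull D n F u y * (hammingDist y (polarEnc n u) : ℝ)
      ≤ (((2 ^ n : ℕ) : ℝ))⁻¹ *
          ∑ u : Fin (2 ^ n) → ZMod 2, ∑ y : Fin (2 ^ n) → ZMod 2,
            Pfull D n u y * (hammingDist y (polarEnc n u) : ℝ)
        + 2 * F.card * δ :=
  distortion_Q_versus_P_general D hD0 hD1 n F δ hF

end
end

section
/- Let 0 < D < 1 and F ⊆ {0,…,N−1}. For ũ_F ∈ {0,1}^{|F|} define the quantization-error distribution 𝒬^{ũ_F}(x̄) = Σ_{ȳ : ((ȳ⊕x̄)H_n^{−1})_F = ũ_F} 2^{−N} ∏_{i∈F^c} P(v_i | v₀^{i−1}, ȳ), where v̄ = (ȳ ⊕ x̄)H_n^{−1}. Then 𝒬^{ũ_F} is independent of ũ_F: for all ũ_F, ũ'_F ∈ {0,1}^{|F|} and all x̄ ∈ {0,1}^N, 𝒬^{ũ_F}(x̄) = 𝒬^{ũ'_F}(x̄). -/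
open Finset

noncomputable section

/-- The quantization-error distribution `𝒬^{ũ_F}(x̄)`: the probability (over the uniform
source word `ȳ` and the randomized rounding) that the quantization error `ȳ ⊕ ūHₙ` equals
`x̄`; the error equals `x̄` iff `ū = (ȳ ⊕ x̄)Hₙ⁻¹`, which requires
`((ȳ ⊕ x̄)Hₙ⁻¹)_F = ũ_F` and occurs with probability `∏_{i∈Fᶜ} P(v_i ∣ v₀^{i−1}, ȳ)`
where `v̄ = (ȳ ⊕ x̄)Hₙ⁻¹`. -/
def quantDist (D : ℝ) (n : ℕ) (F : Finset (Fin (2 ^ n))) (ut : Fin (2 ^ n) → ZMod 2)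
    (x : Fin (2 ^ n) → ZMod 2) : ℝ :=
  ∑ y ∈ Finset.univ.filter (fun y : Fin (2 ^ n) → ZMod 2 =>
      ∀ i ∈ F, Matrix.vecMul (y + x) (polarH n)⁻¹ i = ut i),
    ((2 : ℝ) ^ (2 ^ n))⁻¹ *
      ∏ i ∈ Fᶜ, post D n y i (Matrix.vecMul (y + x) (polarH n)⁻¹)

/-!
Shifting the source word by `w̄Hₙ` and the decoded word by `w̄` leaves every `W^{(i)}`
unchanged, because the BSC only sees `y_j ⊕ x_j` and `ūHₙ` is linear in `ū`; hence every
posterior `P(v_i ∣ v₀^{i−1}, ȳ)` is unchanged as well. Since `Hₙ` is invertible (`Aₙ` and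
`G₂^{⊗n}` are involutions), the substitution `ȳ ↦ ȳ ⊕ (ũ' − ũ)Hₙ` shifts `v̄ = (ȳ ⊕ x̄)Hₙ⁻¹`
by `ũ' − ũ`, so it maps the summation range of `𝒬^{ũ}(x̄)` onto that of `𝒬^{ũ'}(x̄)` and
preserves the summands.
-/

open Matrix

lemma Nat.testBit_sum_two_pow (s : Finset ℕ) (m : ℕ) :
    (∑ i ∈ s, 2 ^ i).testBit m = true ↔ m ∈ s := by
  rw [← Nat.mem_bitIndices, ← List.mem_toFinset, Finset.toFinset_bitIndices_sum_two_pow]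

lemma testBit_bitRevNat (n i m : ℕ) :
    (bitRevNat n i).testBit m = true ↔ m < n ∧ i.testBit (n - 1 - m) = true := by
  rw [bitRevNat, ← sum_filter, Nat.testBit_sum_two_pow, mem_filter, mem_range]

lemma bitRevNat_bitRevNat {n i : ℕ} (hi : i < 2 ^ n) : bitRevNat n (bitRevNat n i) = i := by
  refine Nat.eq_of_testBit_eq fun m => Bool.eq_iff_iff.2 ?_
  rw [testBit_bitRevNat, testBit_bitRevNat]
  by_cases hm : m < n
  · have : n - 1 - (n - 1 - m) = m := by omega
    simp [hm, this, show n - 1 - m < n by omega]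
  · have := Nat.testBit_lt_two_pow (hi.trans_le (Nat.pow_le_pow_right two_pos (not_lt.1 hm)))
    simp [hm, this]

def bitRevPerm (n : ℕ) : Equiv.Perm (Fin (2 ^ n)) :=
  Function.Involutive.toPerm (fun i => ⟨bitRevNat n i, bitRevNat_lt n i⟩)
    fun i => Fin.ext (bitRevNat_bitRevNat i.isLt)

lemma bitRevMatrix_eq_permMatrix (n : ℕ) :
    bitRevMatrix n = (bitRevPerm n).permMatrix (ZMod 2) := by
  ext i j
  simp only [bitRevMatrix, PEquiv.toMatrix_apply, Equiv.toPEquiv_apply, Option.mem_some_iff,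
    Fin.ext_iff, eq_comm]
  rfl

lemma bitRevMatrix_mul_self (n : ℕ) : bitRevMatrix n * bitRevMatrix n = 1 := by
  have : bitRevPerm n * bitRevPerm n = 1 :=
    Equiv.ext fun i => Fin.ext (bitRevNat_bitRevNat i.isLt)
  rw [bitRevMatrix_eq_permMatrix, ← permMatrix_mul, this, permMatrix_one]

lemma G2_mul_self : G2 * G2 = 1 := by decide

lemma kronPow_mul_self (n : ℕ) : kronPow n * kronPow n = 1 := by
  induction n with
  | zero => exact Matrix.one_mul 1
  | succ n ih =>
    rw [kronPow, ← Matrix.coe_reindexAlgEquiv (ZMod 2) (ZMod 2), ← map_mul,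
      ← Matrix.mul_kronecker_mul, G2_mul_self, ih, Matrix.one_kronecker_one, map_one]

lemma polarH_mul_inv (n : ℕ) : polarH n * (polarH n)⁻¹ = 1 := by
  have h : polarH n * (kronPow n * bitRevMatrix n) = 1 := by
    rw [polarH, Matrix.mul_assoc, ← Matrix.mul_assoc (kronPow n), kronPow_mul_self,
      Matrix.one_mul, bitRevMatrix_mul_self]
  rw [Matrix.inv_eq_right_inv h, h]

lemma vecMul_add_polarEnc_polarH_inv (n : ℕ) (u w : Fin (2 ^ n) → ZMod 2) :
    vecMul (u + polarEnc n w) (polarH n)⁻¹ = vecMul u (polarH n)⁻¹ + w := by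
  rw [add_vecMul, polarEnc, vecMul_vecMul, polarH_mul_inv, vecMul_one]

lemma bsc_add_add (D : ℝ) (y x a : ZMod 2) : bsc D (y + a) (x + a) = bsc D y x := by
  simp [bsc]

lemma Wi_add_polarEnc (D : ℝ) (n : ℕ) (y u w : Fin (2 ^ n) → ZMod 2) (i : Fin (2 ^ n)) :
    Wi D n (y + polarEnc n w) i (u + w) = Wi D n y i u := by
  rw [Wi, Wi]
  congr 1
  refine (Finset.sum_equiv (Equiv.addRight w) (fun v => ?_) fun v _ => ?_).symm
  · simp
  · simp [polarEnc, add_vecMul, bsc_add_add]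

lemma post_add_polarEnc (D : ℝ) (n : ℕ) (y u w : Fin (2 ^ n) → ZMod 2) (i : Fin (2 ^ n)) :
    post D n (y + polarEnc n w) i (u + w) = post D n y i u := by
  have hupdate (b : ZMod 2) : Function.update (u + w) i b = Function.update u i (b - w i) + w := by
    ext j
    rcases eq_or_ne j i with rfl | hj
    · simp
    · simp [Function.update_of_ne hj]
  rw [post, post, hupdate, hupdate, Wi_add_polarEnc, Wi_add_polarEnc, Wi_add_polarEnc]
  obtain h | h : w i = 0 ∨ w i = 1 := by generalize w i = c; decide +revert
  · simp [h]
  -- flipping bit `i` only swaps the two terms of the normalizer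
  · rw [h, show (0 : ZMod 2) - 1 = 1 by decide, sub_self, add_comm]

theorem quantDist_independent_of_frozen_bits_general (D : ℝ) (n : ℕ)
    (F : Finset (Fin (2 ^ n))) (ut ut' : Fin (2 ^ n) → ZMod 2)
    (x : Fin (2 ^ n) → ZMod 2) :
    quantDist D n F ut x = quantDist D n F ut' x := by
  have hv (y : Fin (2 ^ n) → ZMod 2) :
      vecMul (y + polarEnc n (ut' - ut) + x) (polarH n)⁻¹ =
        vecMul (y + x) (polarH n)⁻¹ + (ut' - ut) := by
    rw [add_right_comm, vecMul_add_polarEnc_polarH_inv]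
  refine Finset.sum_equiv (Equiv.addRight (polarEnc n (ut' - ut))) (fun y => ?_) fun y _ => ?_
  · simp only [mem_filter, mem_univ, true_and, Equiv.coe_addRight, hv, Pi.add_apply, Pi.sub_apply]
    exact forall₂_congr fun i _ => by rw [add_sub_left_comm, add_eq_left, sub_eq_zero]
  · simp [hv, post_add_polarEnc]

/-- **The quantization-error distribution does not depend on the frozen vector.** -/
theorem quantDist_independent_of_frozen_bits (D : ℝ) (hD0 : 0 < D) (hD1 : D < 1) (n : ℕ)
    (F : Finset (Fin (2 ^ n))) (ut ut' : Fin (2 ^ n) → ZMod 2)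
    (x : Fin (2 ^ n) → ZMod 2) :
    quantDist D n F ut x = quantDist D n F ut' x :=
  quantDist_independent_of_frozen_bits_general D n F ut ut' x

end
end
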